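/- Let n ≥ 3 be an integer, x ≥ 0 a real number, and a_0(n), a_1(n) real sequences. Then V_{n,1}(e_1; x) = (2a_0(n) − a_1(n))x + (1/(n−2))·(1+2x)(3a_0(n) − 2a_1(n)), where e_1(t) = t (in particular the defining series and integrals converge absolutely). -/

import Mathlib

/-!
Since `t · p_{n,k}(t) = (k+1)/(n-1) · p_{n-1,k+1}(t)` and every `p_{m,j}` integrates to
`1/(m-1)` over `(0, ∞)` (a Beta integral, evaluated by integration by parts in the exponent
of `t`), one has `∫ t p_{n,k}(t) dt = (k+1)/((n-1)(n-2))`. The operator thus reduces to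
`∑ₖ (k+1) p¹_{n,k}(x)`, which is computed from the negative binomial series
`∑ₖ p_{n+1,k}(x) = 1` together with `∑ₖ k p_{n,k}(x) = n x`; the latter follows from the
former by the same identity `k p_{n,k}(x) = n x p_{n+1,k-1}(x)`.
-/

open MeasureTheory Filter Topology

/-- Baskakov basis function `p_{n,k}(x) = C(n+k-1, k) x^k / (1+x)^{n+k}`. -/
noncomputable def bask (n k : ℕ) (x : ℝ) : ℝ :=
  (Nat.choose (n + k - 1) k : ℝ) * x ^ k / (1 + x) ^ (n + k)

/-- Modified basis `p^1_{n,k}(x) = a(x,n) p_{n+1,k}(x) + b(x,n) p_{n+1,k-1}(x)`,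
with `p_{n+1,-1} = 0`. -/
noncomputable def p1 (a0 a1 : ℕ → ℝ) (n k : ℕ) (x : ℝ) : ℝ :=
  (a0 n + a1 n * x) * bask (n + 1) k x
    + (a0 n - a1 n * (1 + x)) * (if k = 0 then 0 else bask (n + 1) (k - 1) x)

/-- First-order modified Baskakov–Durrmeyer operator. -/
noncomputable def V1 (a0 a1 : ℕ → ℝ) (n : ℕ) (f : ℝ → ℝ) (x : ℝ) : ℝ :=
  ((n : ℝ) - 1) * ∑' k : ℕ, p1 a0 a1 n k x * ∫ t in Set.Ioi (0 : ℝ), bask n k t * f t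

open Set
open scoped Nat

section BetaIntegral

lemma tendsto_pow_div_one_add_pow_atTop {a b : ℕ} (hab : a < b) :
    Tendsto (fun t : ℝ => t ^ a / (1 + t) ^ b) atTop (𝓝 0) := by
  obtain ⟨d, rfl⟩ := Nat.exists_eq_add_of_lt hab
  have hlim : Tendsto (fun t : ℝ => ((1 + t) ^ (d + 1))⁻¹) atTop (𝓝 0) :=
    ((tendsto_pow_atTop d.succ_ne_zero).comp
      (tendsto_atTop_add_const_left _ 1 tendsto_id)).inv_tendsto_atTop
  refine squeeze_zero' ?_ ?_ hlim
  · filter_upwards [eventually_ge_atTop 0] with t ht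
    positivity
  · filter_upwards [eventually_ge_atTop 0] with t ht
    have h1 : 0 < 1 + t := by linarith
    calc t ^ a / (1 + t) ^ (a + d + 1) ≤ (1 + t) ^ a / (1 + t) ^ (a + d + 1) := by
          gcongr; linarith
      _ = ((1 + t) ^ (d + 1))⁻¹ := by
          rw [add_assoc, pow_add]; field_simp

lemma hasDerivAt_neg_div_one_add_pow (c : ℕ) {t : ℝ} (ht : 1 + t ≠ 0) :
    HasDerivAt (fun t : ℝ => -1 / ((c + 1) * (1 + t) ^ (c + 1))) (1 / (1 + t) ^ (c + 2)) t := by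
  have h := (((hasDerivAt_id t).const_add 1).fun_pow (c + 1)).const_mul ((c : ℝ) + 1)
  refine ((hasDerivAt_const t (-1 : ℝ)).fun_div h
    (mul_ne_zero (by positivity) (pow_ne_zero _ ht))).congr_deriv ?_
  simp only [id, Nat.cast_add, Nat.cast_one, add_tsub_cancel_right, zero_mul, zero_sub, mul_one]
  field_simp
  ring

lemma hasDerivAt_pow_succ_div_one_add_pow_succ (a d : ℕ) {t : ℝ} (ht : 1 + t ≠ 0) :
    HasDerivAt (fun t : ℝ => t ^ (a + 1) / (1 + t) ^ (d + 1))
      ((a + 1) * (t ^ a / (1 + t) ^ (d + 1)) - (d + 1) * (t ^ (a + 1) / (1 + t) ^ (d + 2))) t := by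
  have hq := ((hasDerivAt_id t).const_add 1).fun_pow (d + 1)
  refine ((hasDerivAt_pow (a + 1) t).fun_div hq (pow_ne_zero _ ht)).congr_deriv ?_
  simp only [id, Nat.cast_add, Nat.cast_one, add_tsub_cancel_right, mul_one]
  field_simp
  ring

lemma tendsto_neg_div_one_add_pow_atTop (c : ℕ) :
    Tendsto (fun t : ℝ => -1 / ((c + 1) * (1 + t) ^ (c + 1))) atTop (𝓝 0) := by
  have := (tendsto_pow_div_one_add_pow_atTop (a := 0) c.succ_pos).const_mul (-1 / ((c : ℝ) + 1))
  simp only [pow_zero, mul_zero] at this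
  exact this.congr fun t => by rw [Nat.succ_eq_add_one, mul_one_div, div_div]

lemma integrableOn_Ioi_one_div_one_add_pow (c : ℕ) :
    IntegrableOn (fun t : ℝ => 1 / (1 + t) ^ (c + 2)) (Ioi 0) :=
  integrableOn_Ioi_deriv_of_nonneg'
    (fun t (ht : 0 ≤ t) => hasDerivAt_neg_div_one_add_pow c (by positivity))
    (fun t (ht : 0 < t) => by positivity) (tendsto_neg_div_one_add_pow_atTop c)

lemma integral_Ioi_one_div_one_add_pow (c : ℕ) :
    ∫ t in Ioi (0 : ℝ), 1 / (1 + t) ^ (c + 2) = 1 / (c + 1) := by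
  rw [integral_Ioi_of_hasDerivAt_of_nonneg'
    (fun t (ht : 0 ≤ t) => hasDerivAt_neg_div_one_add_pow c (by positivity))
    (fun t (ht : 0 < t) => by positivity) (tendsto_neg_div_one_add_pow_atTop c)]
  simp [div_eq_inv_mul]

lemma integrableOn_Ioi_pow_div_one_add_pow (a c : ℕ) :
    IntegrableOn (fun t : ℝ => t ^ a / (1 + t) ^ (a + c + 2)) (Ioi 0) := by
  refine (integrableOn_Ioi_one_div_one_add_pow c).mono'
    (by fun_prop : Measurable _).aestronglyMeasurable ?_
  filter_upwards [ae_restrict_mem measurableSet_Ioi] with t (ht : 0 < t)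
  have h1 : 0 < 1 + t := by linarith
  rw [Real.norm_of_nonneg (by positivity)]
  calc t ^ a / (1 + t) ^ (a + c + 2) ≤ (1 + t) ^ a / (1 + t) ^ (a + c + 2) := by
        gcongr; linarith
    _ = 1 / (1 + t) ^ (c + 2) := by
        rw [add_assoc, pow_add]; field_simp

lemma integral_Ioi_pow_succ_div_one_add_pow (a c : ℕ) :
    (a + c + 2) * ∫ t in Ioi (0 : ℝ), t ^ (a + 1) / (1 + t) ^ (a + 1 + c + 2)
      = (a + 1) * ∫ t in Ioi (0 : ℝ), t ^ a / (1 + t) ^ (a + c + 2) := by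
  have hderiv (t : ℝ) (ht : t ∈ Ici 0) :
      HasDerivAt (fun t : ℝ => t ^ (a + 1) / (1 + t) ^ (a + c + 2))
        ((a + 1) * (t ^ a / (1 + t) ^ (a + c + 2))
          - (a + c + 2) * (t ^ (a + 1) / (1 + t) ^ (a + 1 + c + 2))) t := by
    have h := hasDerivAt_pow_succ_div_one_add_pow_succ a (a + c + 1) (t := t)
      (by have : (0 : ℝ) ≤ t := ht; positivity)
    rw [show a + c + 1 + 2 = a + 1 + c + 2 by ring] at h
    exact h.congr_deriv (by push_cast; ring)
  have h₀ := (integrableOn_Ioi_pow_div_one_add_pow a c).const_mul ((a : ℝ) + 1)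
  have h₁ := (integrableOn_Ioi_pow_div_one_add_pow (a + 1) c).const_mul ((a : ℝ) + c + 2)
  have hftc := integral_Ioi_of_hasDerivAt_of_tendsto' hderiv (h₀.sub h₁)
    (tendsto_pow_div_one_add_pow_atTop (by omega))
  rw [integral_sub h₀ h₁, integral_const_mul, integral_const_mul] at hftc
  simp only [ne_eq, Nat.add_eq_zero_iff, one_ne_zero, and_false, not_false_eq_true, zero_pow,
    zero_div, sub_zero] at hftc
  linarith

theorem integral_Ioi_pow_div_one_add_pow (a c : ℕ) :
    ∫ t in Ioi (0 : ℝ), t ^ a / (1 + t) ^ (a + c + 2) = a ! * c ! / (a + c + 1)! := by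
  induction a with
  | zero =>
    simp only [pow_zero, zero_add]
    rw [integral_Ioi_one_div_one_add_pow, Nat.factorial_succ, Nat.factorial_zero]
    push_cast
    field_simp
  | succ a ih =>
    have h := integral_Ioi_pow_succ_div_one_add_pow a c
    rw [ih, mul_div_assoc', eq_div_iff (by positivity)] at h
    rw [show a + 1 + c + 1 = a + c + 1 + 1 by ring, Nat.factorial_succ (a + c + 1),
      Nat.factorial_succ a, eq_div_iff (by positivity)]
    push_cast
    linear_combination h

end BetaIntegral

section Baskakov

lemma bask_add_two (n k : ℕ) (t : ℝ) :
    bask (n + 2) k t = (n + k + 1).choose k * (t ^ k / (1 + t) ^ (k + n + 2)) := by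
  rw [bask, show n + 2 + k - 1 = n + k + 1 by omega, show n + 2 + k = k + n + 2 by omega,
    mul_div_assoc]

theorem integrableOn_bask {n : ℕ} (hn : 2 ≤ n) (k : ℕ) : IntegrableOn (bask n k) (Ioi 0) := by
  obtain ⟨n, rfl⟩ := Nat.exists_eq_add_of_le' hn
  simp_rw [funext (bask_add_two n k)]
  exact (integrableOn_Ioi_pow_div_one_add_pow k n).const_mul _

theorem integral_bask {n : ℕ} (hn : 2 ≤ n) (k : ℕ) :
    ∫ t in Ioi (0 : ℝ), bask n k t = 1 / (n - 1) := by
  obtain ⟨n, rfl⟩ := Nat.exists_eq_add_of_le' hn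
  have h := Nat.choose_mul_factorial_mul_factorial (show k ≤ n + k + 1 by omega)
  rw [show n + k + 1 - k = n + 1 by omega, Nat.factorial_succ n] at h
  simp_rw [bask_add_two, integral_const_mul, integral_Ioi_pow_div_one_add_pow,
    show k + n + 1 = n + k + 1 by ring, ← h]
  have hc : ((n + k + 1).choose k : ℝ) ≠ 0 :=
    Nat.cast_ne_zero.mpr (Nat.choose_pos (by omega)).ne'
  push_cast
  rw [show (n : ℝ) + 2 - 1 = n + 1 by ring]
  field_simp

lemma succ_mul_bask_succ (n k : ℕ) (x : ℝ) :
    (k + 1) * bask n (k + 1) x = n * x * bask (n + 1) k x := by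
  have h : ((k : ℝ) + 1) * (n + k).choose (k + 1) = n * (n + k).choose k := by
    have := Nat.choose_succ_right_eq (n + k) k
    rw [show n + k - k = n by omega] at this
    exact_mod_cast (mul_comm _ _).trans (this.trans (mul_comm _ _))
  rw [bask, bask, show n + (k + 1) - 1 = n + k by omega, show n + 1 + k - 1 = n + k by omega,
    show n + 1 + k = n + (k + 1) by omega, pow_succ]
  linear_combination (x ^ k * x / (1 + x) ^ (n + (k + 1))) * h

lemma bask_succ_mul_id {n : ℕ} (hn : n ≠ 0) (k : ℕ) (t : ℝ) :
    bask (n + 1) k t * t = (k + 1) / n * bask n (k + 1) t := by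
  rw [div_mul_eq_mul_div, succ_mul_bask_succ]
  field_simp

theorem integrableOn_bask_mul_id {n : ℕ} (hn : 3 ≤ n) (k : ℕ) :
    IntegrableOn (fun t => bask n k t * t) (Ioi 0) := by
  obtain ⟨n, rfl⟩ : ∃ m, n = m + 1 := ⟨n - 1, by omega⟩
  simp_rw [bask_succ_mul_id (by omega : n ≠ 0)]
  exact (integrableOn_bask (by omega) _).const_mul _

theorem integral_bask_mul_id {n : ℕ} (hn : 3 ≤ n) (k : ℕ) :
    ∫ t in Ioi (0 : ℝ), bask n k t * t = (k + 1) / ((n - 1) * (n - 2)) := by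
  obtain ⟨n, rfl⟩ : ∃ m, n = m + 1 := ⟨n - 1, by omega⟩
  have h₀ : (n : ℝ) ≠ 0 := by norm_cast; omega
  have h₁ : (n : ℝ) - 1 ≠ 0 := sub_ne_zero.mpr (by norm_cast; omega)
  simp_rw [bask_succ_mul_id (by omega : n ≠ 0), integral_const_mul,
    integral_bask (n := n) (by omega)]
  push_cast
  rw [show (n : ℝ) + 1 - 1 = n by ring, show (n : ℝ) + 1 - 2 = n - 1 by ring]
  field_simp

end Baskakov

section Series

theorem hasSum_bask (n : ℕ) {x : ℝ} (hx : 0 ≤ x) : HasSum (fun k => bask (n + 1) k x) 1 := by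
  have h1 : 0 < 1 + x := by linarith
  have hr : ‖x / (1 + x)‖ < 1 := by
    rw [Real.norm_of_nonneg (by positivity), div_lt_one h1]
    linarith
  have H := (hasSum_choose_mul_geometric_of_norm_lt_one n hr).mul_left ((1 + x) ^ (n + 1))⁻¹
  rw [show 1 - x / (1 + x) = (1 + x)⁻¹ by field_simp; ring, inv_pow, one_div, inv_inv,
    inv_mul_cancel₀ (by positivity)] at H
  refine H.congr_fun fun k => ?_
  rw [bask, show n + 1 + k - 1 = k + n by omega, Nat.choose_symm_add, div_pow, pow_add]
  field_simp

theorem hasSum_nat_mul_bask (n : ℕ) {x : ℝ} (hx : 0 ≤ x) :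
    HasSum (fun k => k * bask n k x) (n * x) := by
  have h := (hasSum_bask n hx).mul_left (n * x)
  rw [mul_one] at h
  have h' : HasSum (fun k : ℕ => ((k + 1 : ℕ) : ℝ) * bask n (k + 1) x) (n * x) :=
    h.congr_fun fun k => by
      push_cast
      rw [succ_mul_bask_succ]
  simpa using HasSum.zero_add (f := fun k : ℕ => (k : ℝ) * bask n k x) h'

theorem hasSum_p1_mul_succ (a0 a1 : ℕ → ℝ) (n : ℕ) {x : ℝ} (hx : 0 ≤ x) :
    HasSum (fun k => p1 a0 a1 n k x * (k + 1))
      ((a0 n + a1 n * x) * ((n + 1) * x + 1) + (a0 n - a1 n * (1 + x)) * ((n + 1) * x + 2)) := by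
  have h₀ := hasSum_bask n hx
  have h₁ := hasSum_nat_mul_bask (n + 1) hx
  have h₂ := h₀.mul_left 2
  push_cast at h₁
  rw [mul_one] at h₂
  have hA : HasSum (fun k : ℕ => (k + 1) * bask (n + 1) k x) ((n + 1) * x + 1) :=
    (h₁.add h₀).congr_fun fun k => by ring
  have hB : HasSum (fun k : ℕ => (k + 1) * (if k = 0 then 0 else bask (n + 1) (k - 1) x))
      ((n + 1) * x + 2) := by
    have h : HasSum (fun k : ℕ => (((k + 1 : ℕ) : ℝ) + 1) *
        (if k + 1 = 0 then 0 else bask (n + 1) (k + 1 - 1) x)) ((n + 1) * x + 2) :=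
      (h₁.add h₂).congr_fun fun k => by
        simp only [Nat.cast_add, Nat.cast_one, Nat.add_eq_zero_iff, one_ne_zero, and_false,
          if_false, Nat.add_sub_cancel]
        ring
    simpa using HasSum.zero_add
      (f := fun k : ℕ => ((k : ℝ) + 1) * (if k = 0 then 0 else bask (n + 1) (k - 1) x)) h
  exact ((hA.mul_left _).add (hB.mul_left _)).congr_fun fun k => by rw [p1]; ring

end Series

theorem V1_moment_e1 (n : ℕ) (hn : 3 ≤ n) (x : ℝ) (hx : 0 ≤ x) (a0 a1 : ℕ → ℝ) :
    (∀ k : ℕ, IntegrableOn (fun t : ℝ => bask n k t * t) (Set.Ioi 0)) ∧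
    Summable (fun k : ℕ =>
      |p1 a0 a1 n k x * ∫ t in Set.Ioi (0 : ℝ), bask n k t * t|) ∧
    V1 a0 a1 n (fun t => t) x =
      (2 * a0 n - a1 n) * x + (1 / ((n : ℝ) - 2)) * ((1 + 2 * x) * (3 * a0 n - 2 * a1 n)) := by
  have hsum : HasSum (fun k => p1 a0 a1 n k x * ∫ t in Set.Ioi (0 : ℝ), bask n k t * t) _ :=
    ((hasSum_p1_mul_succ a0 a1 n hx).div_const (((n : ℝ) - 1) * (n - 2))).congr_fun
      fun k => by rw [integral_bask_mul_id hn, mul_div_assoc]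
  refine ⟨integrableOn_bask_mul_id hn, hsum.summable.abs, ?_⟩
  have h₁ : (n : ℝ) - 1 ≠ 0 := sub_ne_zero.mpr (by norm_cast; omega)
  have h₂ : (n : ℝ) - 2 ≠ 0 := sub_ne_zero.mpr (by norm_cast; omega)
  rw [V1, hsum.tsum_eq]
  field_simp
  ring
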